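/- arXiv:2602.04425 — 4 statements merged into one kernel-verified Lean document; each statement's English description precedes it below -/
import Mathlib

section
/- Let 𝒟 and 𝒞 be categories and L, R : 𝒟 ⥤ 𝒞 functors such that the pairing (L, R) : 𝒟 ⥤ 𝒞 × 𝒞 is a Grothendieck fibration. Then every morphism φ : X ⟶ Y of 𝒟 that is strongly cartesian with respect to (L, R) over a pair of the form (u, 𝟙_{R(Y)}) is strongly cartesian with respect to L over u. Consequently, for every object Y of 𝒟 and every morphism u : A ⟶ L(Y) in 𝒞, a cartesian lift of u to Y with respect to L can be chosen that is simultaneously a strongly cartesian lift of (u, 𝟙_{R(Y)}) with respect to (L, R). -/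
open CategoryTheory

/-
A morphism `ψ : Z ⟶ Y` over `g ≫ u` for `L` lies over `(g, R ψ) ≫ (u, 𝟙)` for the pairing, so it
factors through `φ` over `(g, R ψ)`. Uniqueness survives forgetting `R`: since `φ` lies over an
identity for `R`, every factorization `χ ≫ φ = ψ` has `R χ = R ψ`. In a fibered category cartesian
lifts exist and are strongly cartesian.
-/

namespace CategoryTheory

variable {𝒳 𝒮 𝒯 : Type*} [Category 𝒳] [Category 𝒮] [Category 𝒯]

lemma IsHomLift.map_comp_of_lift_id (p : 𝒳 ⥤ 𝒮) {a b c : 𝒳} {T : 𝒮} (χ : a ⟶ b) (φ : b ⟶ c)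
    [p.IsHomLift (𝟙 T) φ] : p.IsHomLift (p.map (χ ≫ φ)) χ := by
  rw [p.map_comp, IsHomLift.fac' p (𝟙 T) φ, Category.id_comp, eqToHom_trans]
  infer_instance

lemma Functor.prod'_isHomLift_iff (p : 𝒳 ⥤ 𝒮) (q : 𝒳 ⥤ 𝒯) {P Q : 𝒮 × 𝒯} (f : P ⟶ Q)
    {a b : 𝒳} (φ : a ⟶ b) :
    (p.prod' q).IsHomLift f φ ↔ p.IsHomLift f.1 φ ∧ q.IsHomLift f.2 φ := by
  constructor
  · rintro ⟨⟩
    exact ⟨.map φ, .map φ⟩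
  · obtain ⟨P₁, P₂⟩ := P
    obtain ⟨Q₁, Q₂⟩ := Q
    obtain ⟨f₁, f₂⟩ := f
    rintro ⟨⟨⟩, ⟨⟩⟩
    exact .map φ

lemma Functor.IsStronglyCartesian.of_prod'_lift_id {p : 𝒳 ⥤ 𝒮} {q : 𝒳 ⥤ 𝒯} {a b : 𝒳}
    {φ : a ⟶ b} {R : 𝒮} {f : R ⟶ p.obj b}
    (hφ : (p.prod' q).IsStronglyCartesian
      ((f, 𝟙 (q.obj b)) : ((R, q.obj b) : 𝒮 × 𝒯) ⟶ (p.obj b, q.obj b)) φ) :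
    p.IsStronglyCartesian f φ where
  toIsHomLift := ((p.prod'_isHomLift_iff q _ φ).mp hφ.toIsHomLift).1
  universal_property' {a'} g φ' hφ' := by
    have hφ_id : q.IsHomLift (𝟙 (q.obj b)) φ :=
      ((p.prod'_isHomLift_iff q _ φ).mp hφ.toIsHomLift).2
    let f' : ((R, q.obj b) : 𝒮 × 𝒯) ⟶ (p.obj b, q.obj b) := (f, 𝟙 (q.obj b))
    let g' : ((p.obj a', q.obj a') : 𝒮 × 𝒯) ⟶ (R, q.obj b) := (g, q.map φ')
    have hφ'_pair : (p.prod' q).IsHomLift (g' ≫ f') φ' :=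
      (p.prod'_isHomLift_iff q _ φ').mpr
        ⟨hφ', inferInstanceAs (q.IsHomLift (q.map φ' ≫ 𝟙 (q.obj b)) φ')⟩
    let χ₀ := IsStronglyCartesian.map (p.prod' q) f' φ (rfl : g' ≫ f' = g' ≫ f') φ'
    refine ⟨χ₀, ⟨((p.prod'_isHomLift_iff q g' χ₀).mp inferInstance).1,
      IsStronglyCartesian.fac ..⟩, ?_⟩
    rintro χ ⟨hχ, rfl⟩
    have hχ_pair : (p.prod' q).IsHomLift g' χ :=
      (p.prod'_isHomLift_iff q _ χ).mpr ⟨hχ, IsHomLift.map_comp_of_lift_id q (T := q.obj b) χ φ⟩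
    exact IsStronglyCartesian.map_uniq (p.prod' q) f' φ rfl _ χ rfl

lemma Functor.IsFibered.exists_isStronglyCartesian (p : 𝒳 ⥤ 𝒮) [p.IsFibered] {b : 𝒳} {R : 𝒮}
    (f : R ⟶ p.obj b) : ∃ (a : 𝒳) (φ : a ⟶ b), p.IsStronglyCartesian f φ := by
  obtain ⟨a, φ, _⟩ := IsPreFibered.exists_isCartesian p rfl f
  exact ⟨a, φ, inferInstance⟩

end CategoryTheory

/-- If the pairing `(L, R) : 𝒟 ⥤ 𝒞 × 𝒞` is a Grothendieck fibration, then
every morphism `φ : X ⟶ Y` of `𝒟` that is strongly cartesian with respect to `(L, R)` over a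
pair `(u, 𝟙_{R(Y)})` is strongly cartesian with respect to `L` over `u`; consequently every
`u : A ⟶ L(Y)` admits a cartesian lift to `Y` with respect to `L` which is simultaneously a
strongly cartesian lift of `(u, 𝟙_{R(Y)})` with respect to `(L, R)`. -/
theorem left_fibration_lifts_from_pair {𝒟 : Type*} {𝒞 : Type*}
    [Category 𝒟] [Category 𝒞] (L R : 𝒟 ⥤ 𝒞)
    (h : (L.prod' R).IsFibered) :
    (∀ {X Y : 𝒟} (φ : X ⟶ Y) {A : 𝒞} (u : A ⟶ L.obj Y),
      (L.prod' R).IsStronglyCartesian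
        (((u, 𝟙 (R.obj Y))) : ((A, R.obj Y) : 𝒞 × 𝒞) ⟶ (L.obj Y, R.obj Y)) φ →
      L.IsStronglyCartesian u φ) ∧
    (∀ (Y : 𝒟) {A : 𝒞} (u : A ⟶ L.obj Y),
      ∃ (X : 𝒟) (φ : X ⟶ Y),
        (L.prod' R).IsStronglyCartesian
          (((u, 𝟙 (R.obj Y))) : ((A, R.obj Y) : 𝒞 × 𝒞) ⟶ (L.obj Y, R.obj Y)) φ ∧
        L.IsStronglyCartesian u φ) := by
  refine ⟨fun {_ _} _ {_} _ hφ => hφ.of_prod'_lift_id, fun Y A u => ?_⟩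
  obtain ⟨X, φ, hφ⟩ := Functor.IsFibered.exists_isStronglyCartesian (L.prod' R)
    ((u, 𝟙 (R.obj Y)) : ((A, R.obj Y) : 𝒞 × 𝒞) ⟶ (L.obj Y, R.obj Y))
  exact ⟨X, φ, hφ, hφ.of_prod'_lift_id⟩
end

section
/- Let p : ℰ ⥤ ℬ be a Grothendieck fibration, I a category, F : I ⥤ ℰ a diagram, N an object of ℰ, and φ a cone over F with apex N (a natural transformation from the constant functor at N to F). Then there exist a functor F' : I ⥤ ℰ all of whose objects and morphisms lie over p(N) and identities of p(N) respectively (i.e. F' factors through the fiber of p over p(N)), a natural transformation γ : F' ⟶ F whose component γ_x at each object x of I is strongly cartesian over p(φ_x), and a cone ψ over F' with apex N whose components lie over 𝟙_{p(N)}, such that φ_x = γ_x ∘ ψ_x for every object x of I. -/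
/-!
Any natural transformation `φ : G ⟶ F` of diagrams in a fibration factors as a vertical
transformation followed by a cartesian one: pull each `F x` back along `p (φ x)`. The universal
property of the chosen cartesian lifts makes these pullbacks functorial in `x`, with transition
maps over `p (G f)`, and makes the induced vertical maps `G x ⟶ F' x` natural. For a cone `G` is
constant, so every `p (G f)` is an identity and the pulled-back diagram lies in the fiber over
`p N`.
-/

open CategoryTheory

namespace CategoryTheory.Functor

open IsPreFibered

variable {ℰ ℬ I : Type*} [Category ℰ] [Category ℬ] [Category I]
  (p : ℰ ⥤ ℬ) [p.IsFibered] {G F : I ⥤ ℰ} (φ : G ⟶ F)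

noncomputable def pullbackDiagramObj (x : I) : ℰ :=
  pullbackObj rfl (p.map (φ.app x))

lemma pullbackDiagramObj_proj (x : I) : p.obj (pullbackDiagramObj p φ x) = p.obj (G.obj x) :=
  pullbackObj_proj _ _

noncomputable def pullbackDiagramπApp (x : I) : pullbackDiagramObj p φ x ⟶ F.obj x :=
  pullbackMap rfl (p.map (φ.app x))

instance isStronglyCartesian_pullbackDiagramπApp (x : I) :
    p.IsStronglyCartesian (p.map (φ.app x)) (pullbackDiagramπApp p φ x) := by
  unfold pullbackDiagramπApp pullbackDiagramObj; infer_instance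

noncomputable def pullbackDiagramMap {x y : I} (f : x ⟶ y) :
    pullbackDiagramObj p φ x ⟶ pullbackDiagramObj p φ y :=
  IsStronglyCartesian.map p (p.map (φ.app y)) (pullbackDiagramπApp p φ y)
    (f' := p.map (φ.app x) ≫ p.map (F.map f)) (g := p.map (G.map f))
    (by rw [← p.map_comp, ← p.map_comp, ← φ.naturality]) (pullbackDiagramπApp p φ x ≫ F.map f)

instance isHomLift_pullbackDiagramMap {x y : I} (f : x ⟶ y) :
    p.IsHomLift (p.map (G.map f)) (pullbackDiagramMap p φ f) := by
  unfold pullbackDiagramMap; infer_instance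

@[simp]
lemma pullbackDiagramMap_comp_π {x y : I} (f : x ⟶ y) :
    pullbackDiagramMap p φ f ≫ pullbackDiagramπApp p φ y =
      pullbackDiagramπApp p φ x ≫ F.map f := by
  simp [pullbackDiagramMap]

noncomputable def pullbackDiagram : I ⥤ ℰ where
  obj := pullbackDiagramObj p φ
  map := pullbackDiagramMap p φ
  map_id x := by
    have : p.IsHomLift (p.map (G.map (𝟙 x))) (𝟙 (pullbackDiagramObj p φ x)) := by
      rw [G.map_id, p.map_id]; exact IsHomLift.id (pullbackDiagramObj_proj p φ x)
    exact IsStronglyCartesian.ext p (p.map (φ.app x)) (pullbackDiagramπApp p φ x)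
      (p.map (G.map (𝟙 x))) (by simp)
  map_comp f g := by
    have : p.IsHomLift (p.map (G.map (f ≫ g)))
        (pullbackDiagramMap p φ f ≫ pullbackDiagramMap p φ g) := by
      rw [G.map_comp, p.map_comp]; infer_instance
    exact IsStronglyCartesian.ext p (p.map (φ.app _)) (pullbackDiagramπApp p φ _)
      (p.map (G.map (f ≫ g))) (by
        rw [pullbackDiagramMap_comp_π, Category.assoc, pullbackDiagramMap_comp_π,
          ← Category.assoc, pullbackDiagramMap_comp_π, Category.assoc, F.map_comp])

noncomputable def pullbackDiagramπ : pullbackDiagram p φ ⟶ F where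
  app := pullbackDiagramπApp p φ
  naturality _ _ f := pullbackDiagramMap_comp_π p φ f

noncomputable def pullbackDiagramLiftApp (x : I) : G.obj x ⟶ pullbackDiagramObj p φ x :=
  IsStronglyCartesian.map p (p.map (φ.app x)) (pullbackDiagramπApp p φ x)
    (Category.id_comp _).symm (φ.app x)

instance isHomLift_pullbackDiagramLiftApp (x : I) :
    p.IsHomLift (𝟙 (p.obj (G.obj x))) (pullbackDiagramLiftApp p φ x) := by
  unfold pullbackDiagramLiftApp; infer_instance

@[simp]
lemma pullbackDiagramLiftApp_comp_π (x : I) :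
    pullbackDiagramLiftApp p φ x ≫ pullbackDiagramπApp p φ x = φ.app x := by
  simp [pullbackDiagramLiftApp]

noncomputable def pullbackDiagramLift : G ⟶ pullbackDiagram p φ where
  app := pullbackDiagramLiftApp p φ
  naturality x y f := by
    change G.map f ≫ pullbackDiagramLiftApp p φ y =
      pullbackDiagramLiftApp p φ x ≫ pullbackDiagramMap p φ f
    have := IsHomLift.comp_lift_id_right p (p.map (G.map f)) (G.map f)
      (pullbackDiagramLiftApp p φ y)
    have := IsHomLift.comp_lift_id_left p (p.map (G.map f)) (pullbackDiagramMap p φ f)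
      (pullbackDiagramLiftApp p φ x)
    exact IsStronglyCartesian.ext p (p.map (φ.app y)) (pullbackDiagramπApp p φ y)
      (p.map (G.map f)) (by
        rw [Category.assoc, Category.assoc, pullbackDiagramLiftApp_comp_π,
          pullbackDiagramMap_comp_π, ← Category.assoc, pullbackDiagramLiftApp_comp_π,
          φ.naturality])

@[simp]
lemma pullbackDiagramLift_comp_π : pullbackDiagramLift p φ ≫ pullbackDiagramπ p φ = φ := by
  ext x; exact pullbackDiagramLiftApp_comp_π p φ x

end CategoryTheory.Functor

/-- Let `p : ℰ ⥤ ℬ` be a fibration, `F : I ⥤ ℰ` a diagram, `N` an object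
of `ℰ` and `φ` a cone over `F` with apex `N`.  Then there is a diagram `F' : I ⥤ ℰ` lying in
the fiber over `p(N)` (objects over `p(N)`, morphisms over `𝟙_{p(N)}`), a natural
transformation `γ : F' ⟶ F` whose components are strongly cartesian over the `p(φ_x)`, and a
cone `ψ` over `F'` with apex `N` whose components lie over `𝟙_{p(N)}`, such that
`φ_x = γ_x ∘ ψ_x` for every `x`. -/
theorem cone_restricts_to_fiber {ℰ ℬ : Type*} [Category ℰ] [Category ℬ]
    (p : ℰ ⥤ ℬ) [p.IsFibered]
    {I : Type*} [Category I] (F : I ⥤ ℰ) (N : ℰ)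
    (φ : (Functor.const I).obj N ⟶ F) :
    ∃ (F' : I ⥤ ℰ) (γ : F' ⟶ F) (ψ : (Functor.const I).obj N ⟶ F'),
      (∀ x : I, p.obj (F'.obj x) = p.obj N) ∧
      (∀ {x y : I} (f : x ⟶ y), p.IsHomLift (𝟙 (p.obj N)) (F'.map f)) ∧
      (∀ x : I, p.IsStronglyCartesian (p.map (φ.app x)) (γ.app x)) ∧
      (∀ x : I, p.IsHomLift (𝟙 (p.obj N)) (ψ.app x)) ∧
      (∀ x : I, φ.app x = ψ.app x ≫ γ.app x) := by
  refine ⟨p.pullbackDiagram φ, p.pullbackDiagramπ φ, p.pullbackDiagramLift φ,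
    p.pullbackDiagramObj_proj φ, fun f => ?_, p.isStronglyCartesian_pullbackDiagramπApp φ,
    p.isHomLift_pullbackDiagramLiftApp φ,
    fun x => (NatTrans.congr_app (p.pullbackDiagramLift_comp_π φ) x).symm⟩
  have : p.IsHomLift (p.map (𝟙 N)) (p.pullbackDiagramMap φ f) :=
    p.isHomLift_pullbackDiagramMap φ f
  rwa [p.map_id] at this
end

section
/- Let R be a commutative ring, 𝒞 a category, ℳ a set of objects of 𝒞 (the models), and F, G : 𝒞 ⥤ Ch(Mod_R) functors into non-negatively graded chain complexes of R-modules. Assume F is free on ℳ: there exist an index set A, objects M_α ∈ ℳ for α ∈ A, and for each i ≥ 0 subsets B^i_α ⊆ F_i(M_α), such that for every object X of 𝒞 the family of elements F_i(u)(b), indexed by triples (α ∈ A, u : M_α ⟶ X, b ∈ B^i_α), is a basis of the R-module F_i(X). Assume G is acyclic on ℳ: for every M ∈ ℳ and every i ≥ 1, H_i(G(M)) = 0. Then for every natural transformation τ̄₀ : H₀ ∘ F ⟶ H₀ ∘ G there exists a natural transformation τ : F ⟶ G inducing it in degree-0 homology, i.e. H₀(τ_X) = (τ̄₀)_X for every object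 X of 𝒞. -/
open CategoryTheory Limits

universe w v u

/-!
The chain map is built degree by degree as natural transformations `τₙ : Fₙ ⟶ Gₙ`. As `Fₙ` is
free on the models, a natural transformation out of it can be prescribed freely on the
generators `b ∈ Bⁿ_α ⊆ Fₙ(M_α)`, so a map `Fₙ ⟶ K` lifts through `g : H ⟶ K` as soon as its
values on generators lie in the image of `g`. In degree `0` one lifts `π ≫ τ₀` through the
surjection `π : G₀ ⟶ H₀ ∘ G` (`π : X₀ ⟶ H₀ X` the quotient map); in degree `n + 1` one lifts
`d ≫ τₙ` through `d : Gₙ₊₁ ⟶ Gₙ`. On a model `M`, `τₙ (d x)` is a cycle (for `n = 0`: it dies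
in `H₀(G M)`), hence a boundary because `G M` is acyclic.
-/

theorem Nat.exists_seq_of_step {α : ℕ → Sort*} {p : ∀ n, α n → Prop}
    {r : ∀ n, α n → α (n + 1) → Prop} (x₀ : α 0) (h₀ : p 0 x₀)
    (step : ∀ n x, p n x → ∃ y, r n x y ∧ p (n + 1) y) :
    ∃ f : ∀ n, α n, f 0 = x₀ ∧ ∀ n, r n (f n) (f (n + 1)) := by
  choose g hg using step
  let s : ∀ n, {x : α n // p n x} :=
    fun n => Nat.rec ⟨x₀, h₀⟩ (fun n x => ⟨g n x.1 x.2, (hg n x.1 x.2).2⟩) n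
  exact ⟨fun n => (s n).1, rfl, fun n => (hg n _ _).1⟩

namespace HomologicalComplex

variable {𝒞 : Type*} [Category 𝒞] {V : Type*} [Category V] [HasZeroMorphisms V]
  {ι : Type*} {c : ComplexShape ι}

def natTransMk {F G : 𝒞 ⥤ HomologicalComplex V c}
    (φ : ∀ i, F ⋙ eval V c i ⟶ G ⋙ eval V c i)
    (comm : ∀ i j, c.Rel i j →
      φ i ≫ Functor.whiskerLeft G (dNatTrans V c i j) =
        Functor.whiskerLeft F (dNatTrans V c i j) ≫ φ j) :
    F ⟶ G where
  app X :=
    { f := fun i => (φ i).app X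
      comm' := fun i j hij => NatTrans.congr_app (comm i j hij) X }
  naturality _ _ u := by
    ext i
    exact (φ i).naturality u

variable {R : Type u} [CommRing R]

lemma moduleCat_pOpcycles_eq_zero_iff (K : HomologicalComplex (ModuleCat.{v} R) c) {i j : ι}
    (hi : c.prev j = i) (x : K.X j) :
    K.pOpcycles j x = 0 ↔ x ∈ LinearMap.range (K.d i j).hom := by
  subst hi
  exact (K.sc j).moduleCat_pOpcycles_eq_zero_iff x

lemma moduleCat_mem_range_d_of_isZero_homology (K : HomologicalComplex (ModuleCat.{v} R) c)
    {i j k : ι} (hi : c.prev j = i) (hk : c.next j = k) (hK : IsZero (K.homology j))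
    (x : K.X j) (hx : K.d j k x = 0) : x ∈ LinearMap.range (K.d i j).hom :=
  (ShortComplex.moduleCat_exact_iff _).1
    ((K.exactAt_iff' i j k hi hk).1 ((K.exactAt_iff_isZero_homology j).2 hK)) x hx

end HomologicalComplex

namespace ChainComplex

variable (C : Type*) [Category C] [HasZeroMorphisms C] [CategoryWithHomology C]

noncomputable def toHomologyZero :
    HomologicalComplex.eval C (ComplexShape.down ℕ) 0 ⟶
      HomologicalComplex.homologyFunctor C (ComplexShape.down ℕ) 0 where
  app K := (K.pOpcycles 0 ≫ (isoHomologyι₀ K).inv : K.X 0 ⟶ K.homology 0)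
  naturality K L φ := by
    change φ.f 0 ≫ L.pOpcycles 0 ≫ (isoHomologyι₀ L).inv =
      (K.pOpcycles 0 ≫ (isoHomologyι₀ K).inv) ≫ HomologicalComplex.homologyMap φ 0
    rw [Category.assoc, isoHomologyι₀_inv_naturality, HomologicalComplex.p_opcyclesMap_assoc]

instance (K : ChainComplex C ℕ) : Epi ((toHomologyZero C).app K) :=
  epi_comp (K.pOpcycles 0) (isoHomologyι₀ K).inv

variable {C}

lemma homologyFunctor_zero_map_eq {𝒞 : Type*} [Category 𝒞] {F G : 𝒞 ⥤ ChainComplex C ℕ}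
    (τ : F ⟶ G)
    {τ₀ : F ⋙ HomologicalComplex.homologyFunctor C _ 0 ⟶
      G ⋙ HomologicalComplex.homologyFunctor C _ 0}
    (h : ∀ X, (τ.app X).f 0 ≫ (toHomologyZero C).app (G.obj X) =
      (toHomologyZero C).app (F.obj X) ≫ τ₀.app X) (X : 𝒞) :
    (HomologicalComplex.homologyFunctor C _ 0).map (τ.app X) = τ₀.app X :=
  (cancel_epi ((toHomologyZero C).app (F.obj X))).1
    (((toHomologyZero C).naturality (τ.app X)).symm.trans (h X))

variable {R : Type u} [CommRing R]

lemma toHomologyZero_surjective (K : ChainComplex (ModuleCat.{v} R) ℕ) :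
    Function.Surjective ((toHomologyZero _).app K) :=
  (ModuleCat.epi_iff_surjective _).1 inferInstance

lemma toHomologyZero_eq_zero_iff (K : ChainComplex (ModuleCat.{v} R) ℕ) (x : K.X 0) :
    (toHomologyZero _).app K x = 0 ↔ x ∈ LinearMap.range (K.d 1 0).hom := by
  rw [← K.moduleCat_pOpcycles_eq_zero_iff (by simp) x]
  show (isoHomologyι₀ K).inv (K.pOpcycles 0 x) = 0 ↔ _
  exact map_eq_zero_iff _ ((ModuleCat.mono_iff_injective _).1 inferInstance)

end ChainComplex

namespace CategoryTheory.Functor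

variable {R : Type u} [CommRing R] {𝒞 : Type*} [Category 𝒞] {ι : Type w}

def generators (P : 𝒞 ⥤ ModuleCat.{v} R) (Mo : ι → 𝒞) (B : ∀ a, Set (P.obj (Mo a))) (X : 𝒞)
    (t : Σ (a : ι) (_ : Mo a ⟶ X), B a) : P.obj X :=
  P.map t.2.1 t.2.2.1

def IsFreeOn (P : 𝒞 ⥤ ModuleCat.{v} R) (Mo : ι → 𝒞) (B : ∀ a, Set (P.obj (Mo a))) : Prop :=
  ∀ X, LinearIndependent R (P.generators Mo B X) ∧
    Submodule.span R (Set.range (P.generators Mo B X)) = ⊤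

namespace IsFreeOn

variable {P : 𝒞 ⥤ ModuleCat.{v} R} {Mo : ι → 𝒞} {B : ∀ a, Set (P.obj (Mo a))}

noncomputable def basis (hP : P.IsFreeOn Mo B) (X : 𝒞) :
    Module.Basis (Σ (a : ι) (_ : Mo a ⟶ X), B a) R (P.obj X) :=
  Module.Basis.mk (hP X).1 (hP X).2.ge

@[simp]
lemma basis_apply (hP : P.IsFreeOn Mo B) {X : 𝒞} (a : ι) (u : Mo a ⟶ X) (b : B a) :
    hP.basis X ⟨a, u, b⟩ = P.map u b :=
  Module.Basis.mk_apply _ _ _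

lemma natTrans_ext (hP : P.IsFreeOn Mo B) {H : 𝒞 ⥤ ModuleCat.{v} R} {φ ψ : P ⟶ H}
    (h : ∀ a (b : B a), φ.app (Mo a) b = ψ.app (Mo a) b) : φ = ψ := by
  ext X : 2
  refine ModuleCat.hom_ext ((hP.basis X).ext fun ⟨a, u, b⟩ => ?_)
  simpa using congrArg (H.map u) (h a b)

lemma basis_constr_map_apply (hP : P.IsFreeOn Mo B) (H : 𝒞 ⥤ ModuleCat.{v} R)
    (v : ∀ a, B a → H.obj (Mo a)) {X : 𝒞} (a : ι) (u : Mo a ⟶ X) (b : B a) :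
    (hP.basis X).constr R (fun t => H.map t.2.1 (v t.1 t.2.2)) (P.map u b) = H.map u (v a b) := by
  rw [← hP.basis_apply a u b, Module.Basis.constr_basis]

noncomputable def desc (hP : P.IsFreeOn Mo B) (H : 𝒞 ⥤ ModuleCat.{v} R)
    (v : ∀ a, B a → H.obj (Mo a)) : P ⟶ H where
  app X := ModuleCat.ofHom ((hP.basis X).constr R fun t => H.map t.2.1 (v t.1 t.2.2))
  naturality X Y u := by
    refine ModuleCat.hom_ext ((hP.basis X).ext fun ⟨a, w, b⟩ => ?_)
    simp only [ModuleCat.hom_comp, ModuleCat.hom_ofHom, LinearMap.coe_comp, Function.comp_apply,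
      basis_apply, ← ConcreteCategory.comp_apply, ← Functor.map_comp, basis_constr_map_apply]

lemma desc_app_generator (hP : P.IsFreeOn Mo B) (H : 𝒞 ⥤ ModuleCat.{v} R)
    (v : ∀ a, B a → H.obj (Mo a)) (a : ι) (b : B a) :
    (hP.desc H v).app (Mo a) b = v a b := by
  simpa [desc] using hP.basis_constr_map_apply H v a (𝟙 _) b

lemma exists_lift (hP : P.IsFreeOn Mo B) {H K : 𝒞 ⥤ ModuleCat.{v} R} (g : H ⟶ K) (f : P ⟶ K)
    (hf : ∀ a (b : B a), f.app (Mo a) b ∈ LinearMap.range (g.app (Mo a)).hom) :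
    ∃ ψ : P ⟶ H, ψ ≫ g = f := by
  choose v hv using hf
  exact ⟨hP.desc H v, hP.natTrans_ext fun a b => by simp [desc_app_generator, hv]⟩

end IsFreeOn

end CategoryTheory.Functor

namespace ChainComplex

open HomologicalComplex

variable {R : Type u} [CommRing R] {𝒞 : Type*} [Category 𝒞]
  {F G : 𝒞 ⥤ ChainComplex (ModuleCat.{v} R) ℕ}

lemma mem_range_d_of_comp_d_eq {n : ℕ} {φ : F ⋙ eval _ _ n ⟶ G ⋙ eval _ _ n}
    {ψ : F ⋙ eval _ _ (n + 1) ⟶ G ⋙ eval _ _ (n + 1)}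
    (hψ : ψ ≫ Functor.whiskerLeft G (dNatTrans _ _ (n + 1) n) =
      Functor.whiskerLeft F (dNatTrans _ _ (n + 1) n) ≫ φ)
    {X : 𝒞} (hX : IsZero ((G.obj X).homology (n + 1))) (x : (F.obj X).X (n + 2)) :
    ψ.app X ((F.obj X).d (n + 2) (n + 1) x) ∈
      LinearMap.range ((G.obj X).d (n + 2) (n + 1)).hom := by
  refine (G.obj X).moduleCat_mem_range_d_of_isZero_homology (i := n + 2) (k := n)
    (by simp) (by simp) hX _ ?_
  have hdd : (F.obj X).d (n + 1) n ((F.obj X).d (n + 2) (n + 1) x) = 0 :=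
    ConcreteCategory.congr_hom ((F.obj X).d_comp_d (n + 2) (n + 1) n) x
  refine (ConcreteCategory.congr_hom (NatTrans.congr_app hψ X) _).trans ?_
  change φ.app X ((F.obj X).d (n + 1) n ((F.obj X).d (n + 2) (n + 1) x)) = 0
  rw [hdd]
  exact map_zero _

lemma mem_range_d_of_comp_toHomologyZero_eq
    {τ₀ : F ⋙ homologyFunctor _ _ 0 ⟶ G ⋙ homologyFunctor _ _ 0}
    {φ : F ⋙ eval _ _ 0 ⟶ G ⋙ eval _ _ 0}
    (hφ : φ ≫ Functor.whiskerLeft G (toHomologyZero _) =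
      Functor.whiskerLeft F (toHomologyZero _) ≫ τ₀)
    (X : 𝒞) (x : (F.obj X).X 1) :
    φ.app X ((F.obj X).d 1 0 x) ∈ LinearMap.range ((G.obj X).d 1 0).hom := by
  refine (toHomologyZero_eq_zero_iff _ _).1 ?_
  have hdx : (toHomologyZero _).app (F.obj X) ((F.obj X).d 1 0 x) = 0 :=
    (toHomologyZero_eq_zero_iff _ _).2 ⟨x, rfl⟩
  refine (ConcreteCategory.congr_hom (NatTrans.congr_app hφ X) _).trans ?_
  change τ₀.app X ((toHomologyZero _).app (F.obj X) ((F.obj X).d 1 0 x)) = 0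
  rw [hdx]
  exact map_zero _

lemma exists_natTrans_eval_comm_d {ι : Type w} (Mo : ι → 𝒞)
    (B : ∀ n a, Set ((F.obj (Mo a)).X n))
    (hF : ∀ n, (F ⋙ eval _ _ (n + 1)).IsFreeOn Mo (B (n + 1)))
    (hG : ∀ a n, IsZero ((G.obj (Mo a)).homology (n + 1)))
    (φ₀ : F ⋙ eval _ _ 0 ⟶ G ⋙ eval _ _ 0)
    (hφ₀ : ∀ a (x : (F.obj (Mo a)).X 1),
      φ₀.app (Mo a) ((F.obj (Mo a)).d 1 0 x) ∈ LinearMap.range ((G.obj (Mo a)).d 1 0).hom) :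
    ∃ φ : ∀ n, F ⋙ eval _ _ n ⟶ G ⋙ eval _ _ n, φ 0 = φ₀ ∧ ∀ n,
      φ (n + 1) ≫ Functor.whiskerLeft G (dNatTrans _ _ (n + 1) n) =
        Functor.whiskerLeft F (dNatTrans _ _ (n + 1) n) ≫ φ n := by
  refine Nat.exists_seq_of_step (p := fun n (φ : F ⋙ eval _ _ n ⟶ G ⋙ eval _ _ n) =>
      ∀ a (x : (F.obj (Mo a)).X (n + 1)),
        φ.app (Mo a) ((F.obj (Mo a)).d (n + 1) n x) ∈
          LinearMap.range ((G.obj (Mo a)).d (n + 1) n).hom)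
    (r := fun n φ ψ => ψ ≫ Functor.whiskerLeft G (dNatTrans _ _ (n + 1) n) =
      Functor.whiskerLeft F (dNatTrans _ _ (n + 1) n) ≫ φ) φ₀ hφ₀ fun n φ hφ => ?_
  obtain ⟨ψ, hψ⟩ := (hF n).exists_lift (Functor.whiskerLeft G (dNatTrans _ _ (n + 1) n))
    (Functor.whiskerLeft F (dNatTrans _ _ (n + 1) n) ≫ φ) fun a b => hφ a b.1
  exact ⟨ψ, hψ, fun a => mem_range_d_of_comp_d_eq hψ (hG a n)⟩

end ChainComplex

/-- (Acyclic model theorem, existence part.)  Let `R` be a commutative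
ring, `𝒞` a category, `ℳ` a set of models, and `F, G : 𝒞 ⥤ Ch(Mod_R)` functors into
non-negatively graded chain complexes of `R`-modules.  Assume `F` is free on `ℳ`: there are
an index set `ι`, models `Mo a ∈ ℳ`, and subsets `Bs i a ⊆ F_i(Mo a)` such that for every
`X` the family `F_i(u)(b)` indexed by `(a : ι, u : Mo a ⟶ X, b ∈ Bs i a)` is a basis of
`F_i(X)`; and `G` is acyclic on `ℳ`: `H_i(G(M)) = 0` for `M ∈ ℳ`, `i ≥ 1`.  Then every
natural transformation `τ₀ : H₀ ∘ F ⟶ H₀ ∘ G` is induced by a natural transformation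
`τ : F ⟶ G`. -/
theorem acyclic_models_existence {R : Type u} [CommRing R] {𝒞 : Type*} [Category 𝒞]
    (ℳ : Set 𝒞)
    (F G : 𝒞 ⥤ ChainComplex (ModuleCat.{u} R) ℕ)
    (ι : Type w) (Mo : ι → 𝒞) (hMo : ∀ a : ι, Mo a ∈ ℳ)
    (Bs : ∀ (i : ℕ) (a : ι), Set ((F.obj (Mo a)).X i))
    (hfree : ∀ (X : 𝒞) (i : ℕ),
      LinearIndependent R
        (fun t : Σ (a : ι) (_ : Mo a ⟶ X), Bs i a => ((F.map t.2.1).f i) t.2.2.1) ∧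
      Submodule.span R
        (Set.range
          (fun t : Σ (a : ι) (_ : Mo a ⟶ X), Bs i a => ((F.map t.2.1).f i) t.2.2.1)) = ⊤)
    (hacyclic : ∀ M ∈ ℳ, ∀ i : ℕ, 1 ≤ i → IsZero ((G.obj M).homology i))
    (τ₀ : F ⋙ HomologicalComplex.homologyFunctor (ModuleCat.{u} R) (ComplexShape.down ℕ) 0 ⟶
          G ⋙ HomologicalComplex.homologyFunctor (ModuleCat.{u} R) (ComplexShape.down ℕ) 0) :
    ∃ τ : F ⟶ G, ∀ X : 𝒞,
      (HomologicalComplex.homologyFunctor (ModuleCat.{u} R) (ComplexShape.down ℕ) 0).map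
        (τ.app X) = τ₀.app X := by
  have hF : ∀ n, (F ⋙ HomologicalComplex.eval _ _ n).IsFreeOn Mo (Bs n) := fun n X => hfree X n
  obtain ⟨φ₀, hφ₀⟩ := (hF 0).exists_lift
    (Functor.whiskerLeft G (ChainComplex.toHomologyZero _))
    (Functor.whiskerLeft F (ChainComplex.toHomologyZero _) ≫ τ₀)
    fun a _ => ChainComplex.toHomologyZero_surjective _ _
  obtain ⟨φ, rfl, hφ⟩ := ChainComplex.exists_natTrans_eval_comm_d Mo Bs (fun n => hF (n + 1))
    (fun a n => hacyclic _ (hMo a) (n + 1) n.succ_pos) φ₀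
    (fun a => ChainComplex.mem_range_d_of_comp_toHomologyZero_eq hφ₀ (Mo a))
  refine ⟨HomologicalComplex.natTransMk φ fun i j (hij : j + 1 = i) => ?_,
    ChainComplex.homologyFunctor_zero_map_eq _ fun X => NatTrans.congr_app hφ₀ X⟩
  subst hij
  exact hφ j
end

section
/- Let R be a commutative ring, 𝒞 a category, ℳ a set of objects of 𝒞, and F, G : 𝒞 ⥤ Ch(Mod_R) functors into non-negatively graded chain complexes of R-modules, with F free on ℳ and G acyclic on ℳ. If τ, τ' : F ⟶ G are natural transformations inducing the same map in degree-0 homology (H₀(τ_X) = H₀(τ'_X) for every object X), then there is a natural chain homotopy between them: for every object X of 𝒞 a chain homotopy h_X from τ_X to τ'_X, with components (h_X)_i : F_i(X) → G_{i+1}(X), such that for every morphism u : X ⟶ Y and every i ≥ 0 one has G_{i+1}(u) ∘ (h_X)_i = (h_Y)_i ∘ F_i(u). -/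
/-!
View `τ - τ'` as a chain map between the complexes of functors `n ↦ F_n` and `n ↦ G_n`, and
build a null-homotopy of it degree by degree in the functor category; its evaluations at the objects
are then automatically natural. Each step lifts a natural map out of the free functor `F_n`
through a differential of `G`. Such a natural map may take arbitrary values on the basis elements
over the models, so a lift exists once the values at the models lift. In degree `0` they do
because `τ` and `τ'` agree on `H₀`; in higher degrees the obstruction is a cycle of an acyclic
complex.
-/

open CategoryTheory Limits

universe w v u

namespace ChainComplex

variable {V : Type*} [Category* V] [Preadditive V]

theorem nonempty_homotopy_zero_of_exists_lift {P Q : ChainComplex V ℕ} (e : P ⟶ Q)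
    (zero : ∃ h : P.X 0 ⟶ Q.X 1, h ≫ Q.d 1 0 = e.f 0)
    (lift : ∀ (n : ℕ) (E : P.X (n + 1) ⟶ Q.X (n + 1)), E ≫ Q.d (n + 1) n = 0 →
      ∃ h : P.X (n + 1) ⟶ Q.X (n + 2), h ≫ Q.d (n + 2) (n + 1) = E) :
    Nonempty (Homotopy e 0) := by
  obtain ⟨h₀, hh₀⟩ := zero
  choose L hL using lift
  have cycle_one : (e.f 1 - P.d 1 0 ≫ h₀) ≫ Q.d 1 0 = 0 := by
    rw [Preadditive.sub_comp, e.comm, Category.assoc, hh₀, sub_self]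
  have cycle_succ (n : ℕ) (f : P.X n ⟶ Q.X (n + 1)) (f' : P.X (n + 1) ⟶ Q.X (n + 2))
      (hf : e.f (n + 1) = P.d (n + 1) n ≫ f + f' ≫ Q.d (n + 2) (n + 1)) :
      (e.f (n + 2) - P.d (n + 2) (n + 1) ≫ f') ≫ Q.d (n + 2) (n + 1) = 0 := by
    rw [Preadditive.sub_comp, e.comm, Category.assoc, eq_sub_of_add_eq' hf.symm,
      Preadditive.comp_sub, P.d_comp_d_assoc, zero_comp, sub_zero, sub_self]
  exact ⟨Homotopy.mkInductive e h₀ hh₀.symm (L 0 _ cycle_one) (by rw [hL]; abel)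
    fun n p => ⟨L (n + 1) _ (cycle_succ n p.1 p.2.1 p.2.2), by rw [hL]; abel⟩⟩

end ChainComplex

namespace HomologicalComplex

variable {T : Type*} [Category* T] {V : Type*} [Category* V] [Preadditive V]
  {ι : Type*} {c : ComplexShape ι}

def ofFunctor (K : T ⥤ HomologicalComplex V c) : HomologicalComplex (T ⥤ V) c where
  X i := K ⋙ eval V c i
  d i j := Functor.whiskerLeft K (dNatTrans V c i j)
  shape i j h := by ext; exact (K.obj _).shape i j h
  d_comp_d' i j k _ _ := by ext; exact (K.obj _).d_comp_d i j k

def ofFunctorMap {K L : T ⥤ HomologicalComplex V c} (φ : K ⟶ L) :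
    ofFunctor K ⟶ ofFunctor L where
  f i := Functor.whiskerRight φ (eval V c i)
  comm' i j _ := by ext; exact (φ.app _).comm i j

/-- Evaluating `ofFunctor K` at `t` gives `K.obj t` up to structure eta, so the image of `h` under
evaluation is a homotopy between `φ.app t` and `ψ.app t`, with components `(h.hom i j).app t`. -/
def _root_.Homotopy.evaluation {K L : T ⥤ HomologicalComplex V c} {φ ψ : K ⟶ L}
    (h : Homotopy (ofFunctorMap φ) (ofFunctorMap ψ)) (t : T) : Homotopy (φ.app t) (ψ.app t) :=
  ((CategoryTheory.evaluation T V).obj t).mapHomotopy h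

end HomologicalComplex

section Homology

variable {R : Type u} [CommRing R]

theorem CategoryTheory.ShortComplex.moduleCat_τ₂_apply_mem_range_of_homologyMap_eq_zero
    {S₁ S₂ : ShortComplex (ModuleCat.{v} R)} (φ : S₁ ⟶ S₂) (hφ : homologyMap φ = 0)
    (x : S₁.X₂) (hx : S₁.g x = 0) : φ.τ₂ x ∈ LinearMap.range S₂.f.hom := by
  rw [← moduleCat_pOpcycles_eq_zero_iff]
  obtain ⟨z, rfl⟩ : ∃ z, S₁.iCycles z = x :=
    ⟨S₁.moduleCatCyclesIso.inv (⟨x, hx⟩ : LinearMap.ker S₁.g.hom),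
      ConcreteCategory.congr_hom S₁.moduleCatCyclesIso_inv_iCycles _⟩
  calc S₂.pOpcycles (φ.τ₂ (S₁.iCycles z))
      = S₂.homologyι (homologyMap φ (S₁.homologyπ z)) := by
        simp only [← ConcreteCategory.comp_apply]
        simp
    _ = 0 := by simp [hφ]

theorem HomologicalComplex.exists_d_apply_eq_of_homologyMap_eq_zero {ι : Type*}
    {c : ComplexShape ι} {K L : HomologicalComplex (ModuleCat.{v} R) c} (φ : K ⟶ L)
    {i j k : ι} (hi : c.prev j = i) (hk : c.next j = k) (hφ : homologyMap φ j = 0)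
    (x : K.X j) (hx : K.d j k x = 0) : ∃ y : L.X i, L.d i j y = φ.f j x := by
  subst hi hk
  exact ShortComplex.moduleCat_τ₂_apply_mem_range_of_homologyMap_eq_zero _ hφ x hx

theorem ChainComplex.exists_d_one_zero_apply_eq_of_homologyMap_eq_zero
    {K L : ChainComplex (ModuleCat.{v} R) ℕ} (φ : K ⟶ L)
    (hφ : HomologicalComplex.homologyMap φ 0 = 0) (x : K.X 0) :
    ∃ y : L.X 1, L.d 1 0 y = φ.f 0 x :=
  HomologicalComplex.exists_d_apply_eq_of_homologyMap_eq_zero φ (ChainComplex.prev ℕ 0)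
    ChainComplex.next_nat_zero hφ x (by rw [K.shape 0 0 (by simp)]; rfl)

theorem ChainComplex.exists_d_apply_eq_of_isZero_homology
    {K : ChainComplex (ModuleCat.{v} R) ℕ} {n : ℕ} (hK : IsZero (K.homology (n + 1)))
    (x : K.X (n + 1)) (hx : K.d (n + 1) n x = 0) :
    ∃ y : K.X (n + 2), K.d (n + 2) (n + 1) y = x :=
  HomologicalComplex.exists_d_apply_eq_of_homologyMap_eq_zero (𝟙 K) (ChainComplex.prev ℕ _)
    (ChainComplex.next_nat_succ n) (hK.eq_of_src _ _) x hx

end Homology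

section Free

variable {R : Type u} [CommRing R] {𝒞 : Type*} [Category* 𝒞] {ι : Type w}

def IsFreeOnModels (P : 𝒞 ⥤ ModuleCat.{v} R) (Mo : ι → 𝒞)
    (B : ∀ a, Set (P.obj (Mo a))) : Prop :=
  ∀ X : 𝒞,
    LinearIndependent R (fun t : Σ (a : ι) (_ : Mo a ⟶ X), B a => P.map t.2.1 t.2.2.1) ∧
    Submodule.span R
      (Set.range fun t : Σ (a : ι) (_ : Mo a ⟶ X), B a => P.map t.2.1 t.2.2.1) = ⊤

namespace IsFreeOnModels

variable {P : 𝒞 ⥤ ModuleCat.{v} R} {Mo : ι → 𝒞} {B : ∀ a, Set (P.obj (Mo a))}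

noncomputable def basis (hP : IsFreeOnModels P Mo B) (X : 𝒞) :
    Module.Basis (Σ (a : ι) (_ : Mo a ⟶ X), B a) R (P.obj X) :=
  Module.Basis.mk (hP X).1 (hP X).2.ge

theorem basis_apply (hP : IsFreeOnModels P Mo B) {X : 𝒞}
    (t : Σ (a : ι) (_ : Mo a ⟶ X), B a) : hP.basis X t = P.map t.2.1 t.2.2.1 :=
  Module.Basis.mk_apply _ _ _

theorem map_basis (hP : IsFreeOnModels P Mo B) {X Y : 𝒞} (u : X ⟶ Y) (a : ι) (v : Mo a ⟶ X)
    (b : B a) : P.map u (hP.basis X ⟨a, v, b⟩) = hP.basis Y ⟨a, v ≫ u, b⟩ := by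
  simp [basis_apply]

noncomputable def extend (hP : IsFreeOnModels P Mo B) {Q : 𝒞 ⥤ ModuleCat.{v} R}
    (s : ∀ a, B a → Q.obj (Mo a)) : P ⟶ Q where
  app X := ModuleCat.ofHom ((hP.basis X).constr ℕ fun t => Q.map t.2.1 (s t.1 t.2.2))
  naturality X Y u := by
    refine ModuleCat.hom_ext ((hP.basis X).ext fun ⟨a, v, b⟩ => ?_)
    simp [map_basis, Module.Basis.constr_basis]

theorem extend_app_basis (hP : IsFreeOnModels P Mo B) {Q : 𝒞 ⥤ ModuleCat.{v} R}
    (s : ∀ a, B a → Q.obj (Mo a)) {X : 𝒞} (a : ι) (v : Mo a ⟶ X) (b : B a) :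
    (hP.extend s).app X (hP.basis X ⟨a, v, b⟩) = Q.map v (s a b) :=
  Module.Basis.constr_basis _ _ _ _

theorem exists_lift (hP : IsFreeOnModels P Mo B) {Q Q' : 𝒞 ⥤ ModuleCat.{v} R} (d : Q ⟶ Q')
    (E : P ⟶ Q') (hE : ∀ a (b : B a), ∃ y, d.app (Mo a) y = E.app (Mo a) b) :
    ∃ H : P ⟶ Q, H ≫ d = E := by
  choose s hs using hE
  refine ⟨hP.extend s, NatTrans.ext (funext fun X => ?_)⟩
  refine ModuleCat.hom_ext ((hP.basis X).ext fun ⟨a, v, b⟩ => ?_)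
  change d.app X ((hP.extend s).app X _) = E.app X _
  rw [extend_app_basis, NatTrans.naturality_apply, hs, basis_apply, NatTrans.naturality_apply]

variable {F G : 𝒞 ⥤ ChainComplex (ModuleCat.{v} R) ℕ}

theorem exists_comp_d_one_zero_eq {B : ∀ a, Set ((F.obj (Mo a)).X 0)}
    (hF : IsFreeOnModels (F ⋙ HomologicalComplex.eval _ _ 0) Mo B) (φ : F ⟶ G)
    (hφ : ∀ a, HomologicalComplex.homologyMap (φ.app (Mo a)) 0 = 0) :
    ∃ H, H ≫ (HomologicalComplex.ofFunctor G).d 1 0 =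
      (HomologicalComplex.ofFunctorMap φ).f 0 :=
  hF.exists_lift _ _ fun a b =>
    ChainComplex.exists_d_one_zero_apply_eq_of_homologyMap_eq_zero _ (hφ a) b.1

theorem exists_comp_d_eq_of_isZero_homology {n : ℕ}
    {B : ∀ a, Set ((F.obj (Mo a)).X (n + 1))}
    (hF : IsFreeOnModels (F ⋙ HomologicalComplex.eval _ _ (n + 1)) Mo B)
    (hG : ∀ a, IsZero ((G.obj (Mo a)).homology (n + 1)))
    (E : (HomologicalComplex.ofFunctor F).X (n + 1) ⟶
      (HomologicalComplex.ofFunctor G).X (n + 1))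
    (hE : E ≫ (HomologicalComplex.ofFunctor G).d (n + 1) n = 0) :
    ∃ H, H ≫ (HomologicalComplex.ofFunctor G).d (n + 2) (n + 1) = E :=
  hF.exists_lift _ _ fun a b =>
    ChainComplex.exists_d_apply_eq_of_isZero_homology (hG a) _
      (ConcreteCategory.congr_hom (NatTrans.congr_app hE (Mo a)) b.1)

end IsFreeOnModels

end Free

/-- (Acyclic model theorem, uniqueness part.)  With `F` free and `G`
acyclic on the models `ℳ` as in the acyclic model theorem, any two natural transformations
`τ, τ' : F ⟶ G` inducing the same map in degree-0 homology are naturally chain homotopic: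
there are chain homotopies `h_X` from `τ_X` to `τ'_X`, with components
`(h_X)_i : F_i(X) → G_{i+1}(X)`, satisfying the naturality condition
`G_{i+1}(u) ∘ (h_X)_i = (h_Y)_i ∘ F_i(u)` for every `u : X ⟶ Y` and `i ≥ 0`. -/
theorem acyclic_models_natural_homotopy {R : Type u} [CommRing R] {𝒞 : Type*} [Category 𝒞]
    (ℳ : Set 𝒞)
    (F G : 𝒞 ⥤ ChainComplex (ModuleCat.{u} R) ℕ)
    (ι : Type w) (Mo : ι → 𝒞) (hMo : ∀ a : ι, Mo a ∈ ℳ)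
    (Bs : ∀ (i : ℕ) (a : ι), Set ((F.obj (Mo a)).X i))
    (hfree : ∀ (X : 𝒞) (i : ℕ),
      LinearIndependent R
        (fun t : Σ (a : ι) (_ : Mo a ⟶ X), Bs i a => ((F.map t.2.1).f i) t.2.2.1) ∧
      Submodule.span R
        (Set.range
          (fun t : Σ (a : ι) (_ : Mo a ⟶ X), Bs i a => ((F.map t.2.1).f i) t.2.2.1)) = ⊤)
    (hacyclic : ∀ M ∈ ℳ, ∀ i : ℕ, 1 ≤ i → IsZero ((G.obj M).homology i))
    (τ τ' : F ⟶ G)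
    (h₀ : ∀ X : 𝒞,
      (HomologicalComplex.homologyFunctor (ModuleCat.{u} R) (ComplexShape.down ℕ) 0).map
          (τ.app X) =
        (HomologicalComplex.homologyFunctor (ModuleCat.{u} R) (ComplexShape.down ℕ) 0).map
          (τ'.app X)) :
    ∃ h : ∀ X : 𝒞, Homotopy (τ.app X) (τ'.app X),
      ∀ {X Y : 𝒞} (u : X ⟶ Y) (i : ℕ),
        (h X).hom i (i + 1) ≫ (G.map u).f (i + 1) =
          (F.map u).f i ≫ (h Y).hom i (i + 1) := by
  have hF (n : ℕ) : IsFreeOnModels (F ⋙ HomologicalComplex.eval _ _ n) Mo (Bs n) :=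
    fun X => hfree X n
  have hτ (a : ι) : HomologicalComplex.homologyMap ((τ - τ').app (Mo a)) 0 = 0 := by
    rw [NatTrans.app_sub, HomologicalComplex.homologyMap_sub, sub_eq_zero]
    exact h₀ (Mo a)
  obtain ⟨h⟩ := ChainComplex.nonempty_homotopy_zero_of_exists_lift
    (HomologicalComplex.ofFunctorMap τ - HomologicalComplex.ofFunctorMap τ')
    ((hF 0).exists_comp_d_one_zero_eq (τ - τ') hτ) fun n =>
      (hF (n + 1)).exists_comp_d_eq_of_isZero_homology fun a =>
        hacyclic _ (hMo a) (n + 1) n.succ_pos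
  exact ⟨(Homotopy.equivSubZero.symm h).evaluation,
    fun u i => ((h.hom i (i + 1)).naturality u).symm⟩
end
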